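/- (Decomposition Theorem) For every 0 ≤ k ≤ n−1 and every φ ∈ C^k_0(X,ℝ), there exist φ^k ∈ C^k_0(X,ℝ) and φ^i, (φ^i)' ∈ C^i_0(X,ℝ) for 0 ≤ i ≤ k−1 such that, setting (φ^k)' = φ: (1) for every 0 ≤ i ≤ k, ‖(φ^i)'‖² = ‖φ^i‖² + ‖φ^{i−1}‖² + ... + ‖φ^0‖²; and (2) ‖dφ‖² = Σ_{i=0}^{k} (k+1−i) ‖φ^i‖² + Σ_{i=0}^{k} Σ_{τ ∈ X(i−1)} ⟨ (M')⁺_{τ,0} (I − M⁻_{τ,0}) (φ^i)'_τ , (φ^i)'_τ ⟩. -/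

import Mathlib

/-!
Framework: a pure `n`-dimensional finite weighted simplicial complex, following
Kaufman–Oppenheim, "High Order Random Walks: Beyond Spectral Gap".

A complex is given by its finset of faces (finsets of a vertex type `V`) together with
a weight function `m`.  We index levels by **cardinality**: `X.K c` is the set of faces
with `c` elements, i.e. the set `X(k)` of `k`-dimensional faces for `k = c - 1`
(so `X(-1) = X.K 0`, and a pure `n`-dimensional complex has top level `X.K (n+1)`).
-/

noncomputable section

open Finset

/-- The data of a weighted simplicial complex: a finite family of faces and a weight. -/
structure WSC (V : Type*) [DecidableEq V] where
  faces : Finset (Finset V)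
  m : Finset V → ℝ

namespace WSC

variable {V : Type*} [DecidableEq V]

/-- `X.IsWSC n` : `X` is a pure `n`-dimensional finite weighted simplicial complex:
the faces form a nonempty downward-closed family, every face is contained in a face with
`n+1` elements (and no face has more), the weights are positive, and the weight of every
face of cardinality `≤ n` is the sum of the weights of the faces covering it. -/
def IsWSC (X : WSC V) (n : ℕ) : Prop :=
  ∅ ∈ X.faces ∧
  (∀ ⦃σ τ : Finset V⦄, σ ∈ X.faces → τ ⊆ σ → τ ∈ X.faces) ∧
  (∀ ⦃σ⦄, σ ∈ X.faces → σ.card ≤ n + 1) ∧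
  (∀ ⦃σ⦄, σ ∈ X.faces → ∃ η ∈ X.faces, σ ⊆ η ∧ η.card = n + 1) ∧
  (∀ ⦃σ⦄, σ ∈ X.faces → 0 < X.m σ) ∧
  (∀ ⦃τ⦄, τ ∈ X.faces → τ.card ≤ n →
    X.m τ = ∑ σ ∈ X.faces.filter (fun σ => τ ⊆ σ ∧ σ.card = τ.card + 1), X.m σ)

/-- `X.K c` : the faces with `c` elements, i.e. `X(c-1)` in dimension indexing. -/
def K (X : WSC V) (c : ℕ) : Finset (Finset V) := X.faces.filter (fun σ => σ.card = c)

/-- The weighted inner product on cochains supported on the faces with `c` elements. -/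
def inn (X : WSC V) (c : ℕ) (φ ψ : Finset V → ℝ) : ℝ :=
  ∑ σ ∈ X.K c, X.m σ * (φ σ * ψ σ)

/-- The squared norm of a cochain on the faces with `c` elements. -/
def normSq (X : WSC V) (c : ℕ) (φ : Finset V → ℝ) : ℝ := X.inn c φ φ

/-- The norm of a cochain on the faces with `c` elements. -/
def norm (X : WSC V) (c : ℕ) (φ : Finset V → ℝ) : ℝ := Real.sqrt (X.normSq c φ)

/-- `X.cochainZero c φ` : φ belongs to `C^{c-1}_0 (X, ℝ)`, i.e. it is orthogonal to the
constant functions at level `c`. -/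
def cochainZero (X : WSC V) (c : ℕ) (φ : Finset V → ℝ) : Prop :=
  ∑ σ ∈ X.K c, X.m σ * φ σ = 0

/-- The signless differential, from cochains at level `c` to cochains at level `c+1`:
`(d φ)(σ) = ∑_{τ ∈ X(c-1), τ ⊂ σ} φ(τ)`. -/
def d (X : WSC V) (c : ℕ) (φ : Finset V → ℝ) : Finset V → ℝ :=
  fun σ => ∑ τ ∈ (X.K c).filter (fun τ => τ ⊆ σ), φ τ

/-- The (explicit formula for the) adjoint of the signless differential, from cochains at
level `c+1` to cochains at level `c`: `(d* ψ)(τ) = ∑_{σ ⊇ τ} (m σ / m τ) ψ(σ)`. -/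
def dStar (X : WSC V) (c : ℕ) (ψ : Finset V → ℝ) : Finset V → ℝ :=
  fun τ => ∑ σ ∈ (X.K (c + 1)).filter (fun σ => τ ⊆ σ), (X.m σ / X.m τ) * ψ σ

/-- The (lazy) upper random walk operator `M⁺` on cochains at level `c`
(i.e. on `k`-cochains for `k = c-1`; note `k + 2 = c + 1`). -/
def Mup (X : WSC V) (c : ℕ) (φ : Finset V → ℝ) : Finset V → ℝ :=
  fun τ => (1 / ((c : ℝ) + 1)) * φ τ +
    ∑ τ' ∈ (X.K c).filter (fun τ' => τ ∪ τ' ∈ X.K (c + 1)),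
      (X.m (τ ∪ τ') / (((c : ℝ) + 1) * X.m τ)) * φ τ'

/-- The lower random walk operator `M⁻` on cochains at level `c`
(i.e. on `k`-cochains for `k = c-1`; note `k + 1 = c`). -/
def Mdown (X : WSC V) (c : ℕ) (φ : Finset V → ℝ) : Finset V → ℝ :=
  fun τ => (∑ η ∈ (X.K (c - 1)).filter (fun η => η ⊆ τ), X.m τ / ((c : ℝ) * X.m η)) * φ τ +
    ∑ τ' ∈ (X.K c).filter (fun τ' => τ' ≠ τ ∧ τ ∩ τ' ∈ X.K (c - 1)),
      (X.m τ' / ((c : ℝ) * X.m (τ ∩ τ'))) * φ τ'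

/-- The non-lazy upper random walk operator `(M')⁺ = ((k+2)/(k+1)) M⁺ - (1/(k+1)) I`
on cochains at level `c = k+1`. -/
def Mup' (X : WSC V) (c : ℕ) (φ : Finset V → ℝ) : Finset V → ℝ :=
  fun τ => (((c : ℝ) + 1) / (c : ℝ)) * X.Mup c φ τ - (1 / (c : ℝ)) * φ τ

/-- The link `X_τ` of a face `τ`, with the induced weight `m_τ (η) = m (τ ∪ η)`. -/
def link (X : WSC V) (τ : Finset V) : WSC V where
  faces := X.faces.filter (fun η => η ∩ τ = ∅ ∧ τ ∪ η ∈ X.faces)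
  m := fun η => X.m (τ ∪ η)

/-- The localization `φ_τ (η) = φ (τ ∪ η)` of a cochain `φ` to the link of `τ`. -/
def localize (φ : Finset V → ℝ) (τ : Finset V) : Finset V → ℝ := fun η => φ (τ ∪ η)

/-- The underlying graph (1-skeleton) of a complex. -/
def skeleton (Y : WSC V) : SimpleGraph {v : V // ({v} : Finset V) ∈ Y.faces} where
  Adj u w := u ≠ w ∧ ({(u : V), (w : V)} : Finset V) ∈ Y.faces
  symm := ⟨by
    intro u w h
    refine ⟨h.1.symm, ?_⟩
    rw [Finset.pair_comm]
    exact h.2⟩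
  loopless := ⟨by intro u h; exact h.1 rfl⟩

/-- All links of `X` of dimension `≥ 1` (including `X` itself, as the link of `∅`)
have a connected underlying graph. -/
def LinksConnected (X : WSC V) (n : ℕ) : Prop :=
  ∀ c < n, ∀ τ ∈ X.K c, (X.link τ).skeleton.Connected

/-- The second largest eigenvalue of the self-adjoint operator `(M')⁺₀` on `C⁰(Y, ℝ)`,
via its Rayleigh-quotient characterization over the orthogonal complement of the
constant functions (the top eigenfunction). -/
def secondEig (Y : WSC V) : ℝ :=
  sSup {r : ℝ | ∃ ψ : Finset V → ℝ, Y.normSq 1 ψ ≠ 0 ∧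
    (∑ v ∈ Y.K 1, Y.m v * ψ v) = 0 ∧ r = Y.inn 1 (Y.Mup' 1 ψ) ψ / Y.normSq 1 ψ}

/-- The smallest eigenvalue of the self-adjoint operator `(M')⁺₀` on `C⁰(Y, ℝ)`,
via its Rayleigh-quotient characterization. -/
def smallestEig (Y : WSC V) : ℝ :=
  sInf {r : ℝ | ∃ ψ : Finset V → ℝ, Y.normSq 1 ψ ≠ 0 ∧
    r = Y.inn 1 (Y.Mup' 1 ψ) ψ / Y.normSq 1 ψ}

/-- `μ_k = max_{τ ∈ X(k-1)} μ_τ` where `μ_τ` is the second largest eigenvalue of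
`(M')⁺_{τ,0}`; faces `τ ∈ X(k-1)` have `k` elements. -/
def mu (X : WSC V) (k : ℕ) : ℝ :=
  sSup {r : ℝ | ∃ τ ∈ X.K k, r = (X.link τ).secondEig}

/-- `ν_k = min_{τ ∈ X(k-1)} ν_τ` where `ν_τ` is the smallest eigenvalue of
`(M')⁺_{τ,0}`; faces `τ ∈ X(k-1)` have `k` elements. -/
def nu (X : WSC V) (k : ℕ) : ℝ :=
  sInf {r : ℝ | ∃ τ ∈ X.K k, r = (X.link τ).smallestEig}

/-- `X` is a one-sided `λ`-local spectral expander: `μ_k ≤ λ` for every `0 ≤ k ≤ n-1`. -/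
def OneSided (X : WSC V) (n : ℕ) (lam : ℝ) : Prop := ∀ k < n, X.mu k ≤ lam

/-- `X` is a two-sided `λ`-local spectral expander: `μ_k ≤ λ` and `ν_k ≥ -λ`
for every `0 ≤ k ≤ n-1`. -/
def TwoSided (X : WSC V) (n : ℕ) (lam : ℝ) : Prop :=
  ∀ k < n, X.mu k ≤ lam ∧ -lam ≤ X.nu k

end WSC

open WSC

/-!
Expanding `‖d ψ‖²` over the faces `σ` gives the diagonal term `‖ψ‖²` plus the products
`ψ τ * ψ τ'` over pairs of distinct faces `τ, τ'` of `σ`. Grouping these pairs by `ρ = τ ∩ τ'`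
turns them into the non-lazy upper walks on the vertices of the links `X_ρ`, and on those
vertices the lower walk is the average of `ψ_ρ`, namely `(d* ψ)(ρ)`. This gives
`‖d ψ‖² = ‖ψ‖² + Σ_ρ ⟨(M')⁺_{ρ,0} (I - M⁻_{ρ,0}) ψ_ρ, ψ_ρ⟩ + ‖d* ψ‖²`.

Starting from `(φ^k)' = φ`, put `r = ‖d* (φ^i)'‖² / ‖d d* (φ^i)'‖²`,
`(φ^{i-1})' = √r • d* (φ^i)'` and `φ^i = (φ^i)' - r • d d* (φ^i)'`. Then
`‖d (φ^{i-1})'‖ = ‖d* (φ^i)'‖`, so the identity telescopes, and `⟨d d* ψ, ψ⟩ = ‖d* ψ‖²` gives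
`‖φ^i‖² = ‖(φ^i)'‖² - ‖(φ^{i-1})'‖²`. At the bottom `d* (φ^0)'` is a `(-1)`-cochain orthogonal
to the constants, hence zero.
-/

theorem Finset.sum_sum_filter_comm {α β M : Type*} [AddCommMonoid M] (s : Finset α) (t : Finset β)
    (r : α → β → Prop) [∀ a b, Decidable (r a b)] (f : α → β → M) :
    ∑ a ∈ s, ∑ b ∈ t.filter (r a), f a b = ∑ b ∈ t, ∑ a ∈ s.filter (r · b), f a b :=
  Finset.sum_comm' (by intro a b; simp only [Finset.mem_filter]; tauto)

theorem Finset.sum_range_sum_range_succ (a : ℕ → ℝ) (k : ℕ) :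
    ∑ i ∈ Finset.range (k + 1), ∑ j ∈ Finset.range (i + 1), a j =
      ∑ j ∈ Finset.range (k + 1), ((k : ℝ) + 1 - j) * a j := by
  induction k with
  | zero => simp
  | succ k ih =>
    have hcoeff : ∀ j : ℕ, (((k + 1 : ℕ) : ℝ) + 1 - j) * a j = ((k : ℝ) + 1 - j) * a j + a j :=
      fun j => by push_cast; ring
    rw [Finset.sum_range_succ _ (k + 1), ih, Finset.sum_range_succ (fun j => _ * a j) (k + 1),
      Finset.sum_range_succ a (k + 1)]
    simp only [hcoeff, Finset.sum_add_distrib]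
    push_cast
    ring

namespace WSC

variable {V : Type*} [DecidableEq V] {X : WSC V} {n : ℕ}

lemma mem_K {σ : Finset V} {c : ℕ} : σ ∈ X.K c ↔ σ ∈ X.faces ∧ σ.card = c :=
  Finset.mem_filter

namespace IsWSC

lemma empty_mem (hX : X.IsWSC n) : ∅ ∈ X.faces := hX.1

lemma mem_of_subset (hX : X.IsWSC n) {σ τ : Finset V} (hσ : σ ∈ X.faces) (hτσ : τ ⊆ σ) :
    τ ∈ X.faces :=
  hX.2.1 hσ hτσ

lemma m_pos (hX : X.IsWSC n) {σ : Finset V} (hσ : σ ∈ X.faces) : 0 < X.m σ := hX.2.2.2.2.1 hσ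

lemma m_ne_zero (hX : X.IsWSC n) {c : ℕ} {σ : Finset V} (hσ : σ ∈ X.K c) : X.m σ ≠ 0 :=
  (hX.m_pos (mem_K.mp hσ).1).ne'

lemma K_zero (hX : X.IsWSC n) : X.K 0 = {∅} := by
  ext σ
  simp only [mem_K, Finset.card_eq_zero, Finset.mem_singleton]
  exact ⟨fun h => h.2, fun h => ⟨h ▸ hX.empty_mem, h⟩⟩

lemma m_eq_sum_covers (hX : X.IsWSC n) {c : ℕ} (hc : c ≤ n) {τ : Finset V} (hτ : τ ∈ X.K c) :
    X.m τ = ∑ σ ∈ (X.K (c + 1)).filter (τ ⊆ ·), X.m σ := by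
  obtain ⟨hτf, rfl⟩ := mem_K.mp hτ
  rw [hX.2.2.2.2.2 hτf hc]
  congr 1
  ext σ
  simp only [Finset.mem_filter, K]
  tauto

lemma K_filter_subset (hX : X.IsWSC n) {c : ℕ} {σ : Finset V} (hσ : σ ∈ X.faces) :
    (X.K c).filter (· ⊆ σ) = σ.powersetCard c := by
  ext τ
  simp only [Finset.mem_filter, mem_K, Finset.mem_powersetCard]
  exact ⟨fun h => ⟨h.2, h.1.2⟩, fun h => ⟨⟨hX.mem_of_subset hσ h.1, h.2⟩, h.1⟩⟩

end IsWSC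

/-! ### Cochains, `d` and `d*` -/

lemma inn_d_eq_inn_dStar (hX : X.IsWSC n) (c : ℕ) (φ χ : Finset V → ℝ) :
    X.inn (c + 1) (X.d c φ) χ = X.inn c φ (X.dStar c χ) := by
  unfold inn d dStar
  simp_rw [Finset.sum_mul, Finset.mul_sum]
  rw [sum_sum_filter_comm (X.K (c + 1)) (X.K c) (fun σ τ => τ ⊆ σ)]
  refine Finset.sum_congr rfl fun τ hτ => Finset.sum_congr rfl fun σ _ => ?_
  have := hX.m_ne_zero hτ
  field_simp

lemma sum_m_d (hX : X.IsWSC n) {c : ℕ} (hc : c ≤ n) (ψ : Finset V → ℝ) :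
    ∑ σ ∈ X.K (c + 1), X.m σ * X.d c ψ σ = ∑ τ ∈ X.K c, X.m τ * ψ τ := by
  unfold d
  simp_rw [Finset.mul_sum]
  rw [sum_sum_filter_comm (X.K (c + 1)) (X.K c) (fun σ τ => τ ⊆ σ)]
  refine Finset.sum_congr rfl fun τ hτ => ?_
  rw [← Finset.sum_mul, ← hX.m_eq_sum_covers hc hτ]

lemma sum_m_dStar (hX : X.IsWSC n) (c : ℕ) (χ : Finset V → ℝ) :
    ∑ τ ∈ X.K c, X.m τ * X.dStar c χ τ = ((c : ℝ) + 1) * ∑ σ ∈ X.K (c + 1), X.m σ * χ σ := by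
  unfold dStar
  simp_rw [Finset.mul_sum]
  have hcancel : ∀ τ ∈ X.K c, ∀ σ ∈ (X.K (c + 1)).filter (τ ⊆ ·),
      X.m τ * (X.m σ / X.m τ * χ σ) = X.m σ * χ σ := fun τ hτ σ _ => by
    have := hX.m_ne_zero hτ
    field_simp
  rw [Finset.sum_congr rfl fun τ hτ => Finset.sum_congr rfl (hcancel τ hτ),
    sum_sum_filter_comm (X.K c) (X.K (c + 1)) (fun τ σ => τ ⊆ σ)]
  refine Finset.sum_congr rfl fun σ hσ => ?_
  obtain ⟨hσf, hσc⟩ := mem_K.mp hσ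
  rw [Finset.sum_const, hX.K_filter_subset hσf, Finset.card_powersetCard, hσc,
    Nat.choose_succ_self_right, nsmul_eq_mul]
  push_cast
  ring

lemma cochainZero_dStar (hX : X.IsWSC n) {c : ℕ} {ψ : Finset V → ℝ}
    (hψ : X.cochainZero (c + 1) ψ) : X.cochainZero c (X.dStar c ψ) := by
  rw [cochainZero] at hψ ⊢
  rw [sum_m_dStar hX, hψ, mul_zero]

lemma cochainZero_d (hX : X.IsWSC n) {c : ℕ} (hc : c ≤ n) {ψ : Finset V → ℝ}
    (hψ : X.cochainZero c ψ) : X.cochainZero (c + 1) (X.d c ψ) := by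
  rw [cochainZero] at hψ ⊢
  rw [sum_m_d hX hc, hψ]

lemma cochainZero_smul {c : ℕ} (t : ℝ) {ψ : Finset V → ℝ} (hψ : X.cochainZero c ψ) :
    X.cochainZero c (t • ψ) := by
  rw [cochainZero] at hψ ⊢
  simp only [Pi.smul_apply, smul_eq_mul, mul_left_comm _ t, ← Finset.mul_sum, hψ, mul_zero]

lemma cochainZero_sub {c : ℕ} {ψ χ : Finset V → ℝ} (hψ : X.cochainZero c ψ)
    (hχ : X.cochainZero c χ) : X.cochainZero c (ψ - χ) := by
  rw [cochainZero] at hψ hχ ⊢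
  simp only [Pi.sub_apply, mul_sub, Finset.sum_sub_distrib, hψ, hχ, sub_zero]

lemma normSq_zero_eq_zero_of_cochainZero (hX : X.IsWSC n) {χ : Finset V → ℝ}
    (hχ : X.cochainZero 0 χ) : X.normSq 0 χ = 0 := by
  rw [cochainZero, hX.K_zero, Finset.sum_singleton] at hχ
  rw [normSq, inn, hX.K_zero, Finset.sum_singleton, ← mul_assoc, hχ, zero_mul]

lemma normSq_nonneg (hX : X.IsWSC n) (c : ℕ) (ψ : Finset V → ℝ) : 0 ≤ X.normSq c ψ :=
  Finset.sum_nonneg fun _ hσ => mul_nonneg (hX.m_pos (mem_K.mp hσ).1).le (mul_self_nonneg _)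

lemma eq_zero_of_normSq_eq_zero (hX : X.IsWSC n) {c : ℕ} {ψ : Finset V → ℝ}
    (h : X.normSq c ψ = 0) {σ : Finset V} (hσ : σ ∈ X.K c) : ψ σ = 0 := by
  have hterm := (Finset.sum_eq_zero_iff_of_nonneg fun τ hτ =>
    mul_nonneg (hX.m_pos (mem_K.mp hτ).1).le (mul_self_nonneg (ψ τ))).mp h σ hσ
  exact mul_self_eq_zero.mp ((mul_eq_zero.mp hterm).resolve_left (hX.m_ne_zero hσ))

lemma d_smul (c : ℕ) (t : ℝ) (ψ : Finset V → ℝ) : X.d c (t • ψ) = t • X.d c ψ := by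
  ext σ
  simp only [d, Pi.smul_apply, smul_eq_mul, Finset.mul_sum]

lemma normSq_smul (c : ℕ) (t : ℝ) (ψ : Finset V → ℝ) :
    X.normSq c (t • ψ) = t ^ 2 * X.normSq c ψ := by
  simp only [normSq, inn, Pi.smul_apply, smul_eq_mul, Finset.mul_sum]
  exact Finset.sum_congr rfl fun _ _ => by ring

lemma normSq_sub_smul (c : ℕ) (t : ℝ) (ψ χ : Finset V → ℝ) :
    X.normSq c (ψ - t • χ) = X.normSq c ψ - 2 * t * X.inn c χ ψ + t ^ 2 * X.normSq c χ := by
  simp only [normSq, inn, Pi.sub_apply, Pi.smul_apply, smul_eq_mul, Finset.mul_sum,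
    ← Finset.sum_sub_distrib, ← Finset.sum_add_distrib]
  exact Finset.sum_congr rfl fun _ _ => by ring

/-! ### Links -/

lemma mem_link_K (hX : X.IsWSC n) {ρ η : Finset V} {c : ℕ} :
    η ∈ (X.link ρ).K c ↔ Disjoint ρ η ∧ ρ ∪ η ∈ X.faces ∧ η.card = c := by
  simp only [mem_K, link, Finset.mem_filter, ← Finset.disjoint_iff_inter_eq_empty,
    disjoint_comm (a := η)]
  exact ⟨fun h => ⟨h.1.2.1, h.1.2.2, h.2⟩,
    fun h => ⟨⟨hX.mem_of_subset h.2.1 Finset.subset_union_right, h.1, h.2.1⟩, h.2.2⟩⟩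

lemma union_mem_K_of_mem_link_K (hX : X.IsWSC n) {ρ η : Finset V} {b c : ℕ}
    (hρ : ρ ∈ X.K b) (hη : η ∈ (X.link ρ).K c) : ρ ∪ η ∈ X.K (b + c) := by
  obtain ⟨hdisj, hface, hcard⟩ := (mem_link_K hX).mp hη
  rw [mem_K, Finset.card_union_of_disjoint hdisj, (mem_K.mp hρ).2, hcard]
  exact ⟨hface, rfl⟩

lemma sum_link_K (hX : X.IsWSC n) {ρ : Finset V} {b : ℕ} (hρ : ρ ∈ X.K b) (c : ℕ)
    (f : Finset V → ℝ) :
    ∑ η ∈ (X.link ρ).K c, f (ρ ∪ η) = ∑ σ ∈ (X.K (b + c)).filter (ρ ⊆ ·), f σ := by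
  refine Finset.sum_nbij' (ρ ∪ ·) (· \ ρ) (fun η hη => ?_) (fun σ hσ => ?_)
    (fun η hη => ?_) (fun σ hσ => ?_) (fun _ _ => rfl)
  · exact Finset.mem_filter.mpr
      ⟨union_mem_K_of_mem_link_K hX hρ hη, Finset.subset_union_left⟩
  · obtain ⟨hσK, hρσ⟩ := Finset.mem_filter.mp hσ
    obtain ⟨hσf, hσc⟩ := mem_K.mp hσK
    refine (mem_link_K hX).mpr ⟨Finset.disjoint_sdiff, ?_, ?_⟩
    · rwa [Finset.union_sdiff_of_subset hρσ]
    · rw [Finset.card_sdiff_of_subset hρσ, hσc, (mem_K.mp hρ).2]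
      omega
  · exact Finset.union_sdiff_cancel_left ((mem_link_K hX).mp hη).1
  · exact Finset.union_sdiff_of_subset (Finset.mem_filter.mp hσ).2

lemma link_K_zero (hX : X.IsWSC n) {ρ : Finset V} (hρ : ρ ∈ X.faces) :
    (X.link ρ).K 0 = {∅} := by
  ext η
  rw [mem_link_K hX, Finset.card_eq_zero, Finset.mem_singleton]
  constructor
  · exact fun h => h.2.2
  · rintro rfl
    exact ⟨Finset.disjoint_empty_right ρ, by rwa [Finset.union_empty], rfl⟩

lemma Mup'_one_apply (Y : WSC V) (χ : Finset V → ℝ) (τ : Finset V) :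
    Y.Mup' 1 χ τ = ∑ τ' ∈ (Y.K 1).filter (τ ∪ · ∈ Y.K 2), Y.m (τ ∪ τ') / Y.m τ * χ τ' := by
  have hcoeff : ∀ τ', ((1 : ℝ) + 1) / 1 * (Y.m (τ ∪ τ') / ((1 + 1) * Y.m τ) * χ τ') =
      Y.m (τ ∪ τ') / Y.m τ * χ τ' := fun _ => by ring
  simp only [Mup', Mup, Nat.cast_one, mul_add, Finset.mul_sum, hcoeff]
  ring

lemma inn_Mup'_one {Y : WSC V} (hm : ∀ τ ∈ Y.K 1, Y.m τ ≠ 0) (χ : Finset V → ℝ) :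
    Y.inn 1 (Y.Mup' 1 χ) χ =
      ∑ τ ∈ Y.K 1, ∑ τ' ∈ (Y.K 1).filter (τ ∪ · ∈ Y.K 2), Y.m (τ ∪ τ') * (χ τ * χ τ') := by
  refine Finset.sum_congr rfl fun τ hτ => ?_
  rw [Mup'_one_apply, Finset.sum_mul, Finset.mul_sum]
  refine Finset.sum_congr rfl fun τ' _ => ?_
  have := hm τ hτ
  field_simp

lemma Mdown_one_apply {Y : WSC V} (hY : Y.K 0 = {∅}) (χ : Finset V → ℝ) {τ : Finset V}
    (hτ : τ ∈ Y.K 1) :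
    Y.Mdown 1 χ τ = (∑ τ' ∈ Y.K 1, Y.m τ' * χ τ') / Y.m ∅ := by
  have hdisj : ∀ τ' ∈ Y.K 1, τ' ≠ τ → τ ∩ τ' = ∅ := fun τ' hτ' hne => by
    obtain ⟨a, rfl⟩ := Finset.card_eq_one.mp (mem_K.mp hτ).2
    obtain ⟨b, rfl⟩ := Finset.card_eq_one.mp (mem_K.mp hτ').2
    exact Finset.singleton_inter_of_notMem (by simpa [eq_comm] using hne)
  have hfilter : (Y.K 1).filter (fun τ' => τ' ≠ τ ∧ τ ∩ τ' ∈ Y.K (1 - 1)) = (Y.K 1).erase τ := by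
    ext τ'
    simp only [Finset.mem_filter, Finset.mem_erase, Nat.sub_self, hY, Finset.mem_singleton]
    exact ⟨fun h => ⟨h.2.1, h.1⟩, fun h => ⟨h.2, h.1, hdisj τ' h.2 h.1⟩⟩
  rw [Mdown, hfilter, Nat.sub_self, hY, Finset.filter_singleton,
    if_pos (Finset.empty_subset τ), Finset.sum_singleton, ← Finset.add_sum_erase _ _ hτ,
    add_div, Finset.sum_div]
  congr 1
  · simp only [Nat.cast_one, one_mul]
    ring
  · refine Finset.sum_congr rfl fun τ' hτ' => ?_
    rw [hdisj τ' (Finset.mem_of_mem_erase hτ') (Finset.ne_of_mem_erase hτ'), Nat.cast_one,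
      one_mul]
    ring

/-- The local term `⟨(M')⁺_{ρ,0} (I - M⁻_{ρ,0}) ψ_ρ, ψ_ρ⟩` of the decomposition. -/
def localForm (X : WSC V) (ρ : Finset V) (ψ : Finset V → ℝ) : ℝ :=
  (X.link ρ).inn 1
    ((X.link ρ).Mup' 1 (fun η => localize ψ ρ η - (X.link ρ).Mdown 1 (localize ψ ρ) η))
    (localize ψ ρ)

lemma link_m (ρ η : Finset V) : (X.link ρ).m η = X.m (ρ ∪ η) := rfl

lemma link_m_pos (hX : X.IsWSC n) {ρ τ : Finset V} {c : ℕ} (hτ : τ ∈ (X.link ρ).K c) :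
    0 < (X.link ρ).m τ :=
  hX.m_pos ((mem_link_K hX).mp hτ).2.1

lemma sum_link_m_localize (hX : X.IsWSC n) {ρ : Finset V} {b : ℕ} (hρ : ρ ∈ X.K b)
    (ψ : Finset V → ℝ) :
    ∑ τ ∈ (X.link ρ).K 1, (X.link ρ).m τ * localize ψ ρ τ = X.m ρ * X.dStar b ψ ρ := by
  have := hX.m_ne_zero hρ
  rw [dStar, Finset.mul_sum]
  exact (sum_link_K hX hρ 1 fun σ => X.m σ * ψ σ).trans
    (Finset.sum_congr rfl fun σ _ => by field_simp)

lemma link_Mdown_one_localize (hX : X.IsWSC n) {ρ : Finset V} {b : ℕ} (hρ : ρ ∈ X.K b)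
    (ψ : Finset V → ℝ) {τ : Finset V} (hτ : τ ∈ (X.link ρ).K 1) :
    (X.link ρ).Mdown 1 (localize ψ ρ) τ = X.dStar b ψ ρ := by
  rw [Mdown_one_apply (link_K_zero hX (mem_K.mp hρ).1) _ hτ, sum_link_m_localize hX hρ,
    link_m, Finset.union_empty, mul_div_cancel_left₀ _ (hX.m_ne_zero hρ)]

lemma link_K_one_filter_adj (hX : X.IsWSC n) {ρ τ : Finset V} (hτ : τ ∈ (X.link ρ).K 1) :
    ((X.link ρ).K 1).filter (τ ∪ · ∈ (X.link ρ).K 2) = (X.link (ρ ∪ τ)).K 1 := by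
  obtain ⟨hρτ, -, hτc⟩ := (mem_link_K hX).mp hτ
  ext τ'
  simp only [Finset.mem_filter, mem_link_K hX, Finset.disjoint_union_left,
    Finset.disjoint_union_right, Finset.union_assoc]
  constructor
  · rintro ⟨⟨hρτ', -, hτ'c⟩, -, hface, hcard⟩
    refine ⟨⟨hρτ', ?_⟩, hface, hτ'c⟩
    rw [← Finset.card_union_eq_card_add_card, hcard, hτc, hτ'c]
  · rintro ⟨⟨hρτ', hττ'⟩, hface, hτ'c⟩
    refine ⟨⟨hρτ', hX.mem_of_subset hface ?_, hτ'c⟩, ⟨hρτ, hρτ'⟩, hface, ?_⟩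
    · exact Finset.union_subset_union_right Finset.subset_union_right
    · rw [Finset.card_union_of_disjoint hττ', hτc, hτ'c]

lemma sum_link_adj_m (hX : X.IsWSC n) {ρ τ : Finset V} {b : ℕ} (hbn : b + 1 ≤ n)
    (hρ : ρ ∈ X.K b) (hτ : τ ∈ (X.link ρ).K 1) :
    ∑ τ' ∈ ((X.link ρ).K 1).filter (τ ∪ · ∈ (X.link ρ).K 2), (X.link ρ).m (τ ∪ τ') =
      (X.link ρ).m τ := by
  have hρτ := union_mem_K_of_mem_link_K hX hρ hτ
  rw [link_K_one_filter_adj hX hτ]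
  simp only [link_m, ← Finset.union_assoc]
  rw [sum_link_K hX hρτ 1 X.m, ← hX.m_eq_sum_covers hbn hρτ]

lemma localForm_eq (hX : X.IsWSC n) {ρ : Finset V} {b : ℕ} (hbn : b + 1 ≤ n)
    (hρ : ρ ∈ X.K b) (ψ : Finset V → ℝ) :
    X.localForm ρ ψ = (X.link ρ).inn 1 ((X.link ρ).Mup' 1 (localize ψ ρ)) (localize ψ ρ) -
      X.m ρ * (X.dStar b ψ ρ * X.dStar b ψ ρ) := by
  have hMup' : ∀ τ ∈ (X.link ρ).K 1,
      (X.link ρ).Mup' 1 (fun η => localize ψ ρ η - (X.link ρ).Mdown 1 (localize ψ ρ) η) τ =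
        (X.link ρ).Mup' 1 (localize ψ ρ) τ - X.dStar b ψ ρ := fun τ hτ => by
    rw [Mup'_one_apply, Mup'_one_apply]
    rw [Finset.sum_congr rfl fun τ' hτ' => by
      rw [link_Mdown_one_localize hX hρ ψ (Finset.mem_filter.mp hτ').1]]
    simp only [mul_sub, Finset.sum_sub_distrib, ← Finset.sum_mul, ← Finset.sum_div,
      sum_link_adj_m hX hbn hρ hτ, div_self (link_m_pos hX hτ).ne', one_mul]
  simp only [localForm, inn]
  rw [Finset.sum_congr rfl fun τ hτ => by rw [hMup' τ hτ]]
  simp only [sub_mul, mul_sub, Finset.sum_sub_distrib]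
  rw [← mul_assoc, mul_comm (X.m ρ), mul_assoc, ← sum_link_m_localize hX hρ ψ,
    Finset.mul_sum]
  congr 1
  exact Finset.sum_congr rfl fun _ _ => by ring

/-! ### The expansion of `‖d ψ‖²` -/

lemma card_inter_eq_and_union_eq {σ τ τ' : Finset V} {b : ℕ} (hσ : σ.card = b + 2)
    (hτ : τ.card = b + 1) (hτ' : τ'.card = b + 1) (hτσ : τ ⊆ σ) (hτ'σ : τ' ⊆ σ)
    (hne : τ' ≠ τ) : (τ ∩ τ').card = b ∧ τ ∪ τ' = σ := by
  have hinter : (τ ∩ τ').card < b + 1 := by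
    refine hτ ▸ Finset.card_lt_card (Finset.inter_subset_left.ssubset_of_ne fun h => hne ?_)
    exact (Finset.eq_of_subset_of_card_le (h ▸ Finset.inter_subset_right) (by omega)).symm
  have hunion := Finset.card_le_card (Finset.union_subset hτσ hτ'σ)
  have := Finset.card_union_add_card_inter τ τ'
  exact ⟨by omega, Finset.eq_of_subset_of_card_le (Finset.union_subset hτσ hτ'σ) (by omega)⟩

lemma sdiff_mem_link_K (hX : X.IsWSC n) {τ τ' : Finset V} {c : ℕ} (hτ : τ ∈ X.faces)
    (hc : (τ \ τ').card = c) : τ \ τ' ∈ (X.link (τ ∩ τ')).K c := by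
  refine (mem_link_K hX).mpr ⟨(Finset.disjoint_sdiff_inter τ τ').symm, ?_, hc⟩
  rwa [Finset.union_comm, Finset.sdiff_union_inter]

lemma link_edge_of_faces (hX : X.IsWSC n) {σ τ τ' : Finset V} {b : ℕ} (hσ : σ ∈ X.K (b + 2))
    (hτ : τ ∈ X.K (b + 1)) (hτ' : τ' ∈ X.K (b + 1)) (hτσ : τ ⊆ σ) (hτ'σ : τ' ⊆ σ)
    (hne : τ' ≠ τ) :
    τ ∩ τ' ∈ X.K b ∧ τ \ τ' ∈ (X.link (τ ∩ τ')).K 1 ∧ τ' \ τ ∈ (X.link (τ ∩ τ')).K 1 ∧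
      (τ \ τ') ∪ (τ' \ τ) ∈ (X.link (τ ∩ τ')).K 2 ∧
      (τ ∩ τ') ∪ (τ \ τ') = τ ∧ (τ ∩ τ') ∪ (τ' \ τ) = τ' ∧ τ ∪ τ' = σ := by
  obtain ⟨hσf, hσc⟩ := mem_K.mp hσ
  obtain ⟨hτf, hτc⟩ := mem_K.mp hτ
  obtain ⟨hτ'f, hτ'c⟩ := mem_K.mp hτ'
  obtain ⟨hinter, hunion⟩ := card_inter_eq_and_union_eq hσc hτc hτ'c hτσ hτ'σ hne
  have hsdiff : (τ \ τ').card = 1 := by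
    have := Finset.card_sdiff_add_card_inter τ τ'
    omega
  have hsdiff' : (τ' \ τ).card = 1 := by
    have := Finset.card_sdiff_add_card_inter τ' τ
    rw [Finset.inter_comm] at this
    omega
  have hρτ : (τ ∩ τ') ∪ (τ \ τ') = τ := by rw [Finset.union_comm, Finset.sdiff_union_inter]
  have hρτ' : (τ ∩ τ') ∪ (τ' \ τ) = τ' := by
    rw [Finset.union_comm, Finset.inter_comm, Finset.sdiff_union_inter]
  refine ⟨mem_K.mpr ⟨hX.mem_of_subset hτf Finset.inter_subset_left, hinter⟩,
    sdiff_mem_link_K hX hτf hsdiff, Finset.inter_comm τ τ' ▸ sdiff_mem_link_K hX hτ'f hsdiff',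
    (mem_link_K hX).mpr ⟨?_, ?_, ?_⟩, hρτ, hρτ', hunion⟩
  · exact Finset.disjoint_union_right.mpr
      ⟨(Finset.disjoint_sdiff_inter τ τ').symm,
        Finset.inter_comm τ' τ ▸ (Finset.disjoint_sdiff_inter τ' τ).symm⟩
  · rwa [← Finset.union_assoc, hρτ, Finset.union_sdiff_self_eq_union, hunion]
  · rw [Finset.card_union_of_disjoint disjoint_sdiff_sdiff, hsdiff, hsdiff']

lemma faces_of_link_edge (hX : X.IsWSC n) {ρ a a' : Finset V} {b : ℕ} (hρ : ρ ∈ X.K b)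
    (ha : a ∈ (X.link ρ).K 1) (ha' : a' ∈ (X.link ρ).K 1) (hedge : a ∪ a' ∈ (X.link ρ).K 2) :
    ρ ∪ a ∪ a' ∈ X.K (b + 2) ∧ ρ ∪ a ∈ X.K (b + 1) ∧ ρ ∪ a' ∈ X.K (b + 1) ∧
      ρ ∪ a ⊆ ρ ∪ a ∪ a' ∧ ρ ∪ a' ⊆ ρ ∪ a ∪ a' ∧ ρ ∪ a' ≠ ρ ∪ a ∧
      (ρ ∪ a) ∩ (ρ ∪ a') = ρ ∧ (ρ ∪ a) \ (ρ ∪ a') = a ∧ (ρ ∪ a') \ (ρ ∪ a) = a' := by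
  obtain ⟨hρa, -, hac⟩ := (mem_link_K hX).mp ha
  obtain ⟨hρa', -, ha'c⟩ := (mem_link_K hX).mp ha'
  obtain ⟨-, -, hedgec⟩ := (mem_link_K hX).mp hedge
  have haa' : Disjoint a a' := by
    rw [← Finset.card_union_eq_card_add_card, hedgec, hac, ha'c]
  have hmem : ∀ x, (x ∈ ρ → x ∉ a) ∧ (x ∈ ρ → x ∉ a') ∧ (x ∈ a → x ∉ a') := fun x =>
    ⟨fun h => Finset.disjoint_left.mp hρa h, fun h => Finset.disjoint_left.mp hρa' h,
      fun h => Finset.disjoint_left.mp haa' h⟩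
  have hsdiff : (ρ ∪ a) \ (ρ ∪ a') = a := by
    ext x
    simp only [Finset.mem_sdiff, Finset.mem_union]
    have := hmem x
    tauto
  have hsdiff' : (ρ ∪ a') \ (ρ ∪ a) = a' := by
    ext x
    simp only [Finset.mem_sdiff, Finset.mem_union]
    have := hmem x
    tauto
  refine ⟨Finset.union_assoc ρ a a' ▸ union_mem_K_of_mem_link_K hX hρ hedge,
    union_mem_K_of_mem_link_K hX hρ ha, union_mem_K_of_mem_link_K hX hρ ha',
    Finset.subset_union_left, Finset.union_subset_union_left Finset.subset_union_left |>.trans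
      (by rw [Finset.union_assoc, Finset.union_comm a a', ← Finset.union_assoc]), ?_, ?_,
    hsdiff, hsdiff'⟩
  · intro h
    rw [h, Finset.sdiff_self] at hsdiff
    rw [← hsdiff, Finset.card_empty] at hac
    exact zero_ne_one hac
  · ext x
    simp only [Finset.mem_inter, Finset.mem_union]
    have := hmem x
    tauto

lemma sum_cross_terms (hX : X.IsWSC n) (b : ℕ) (ψ : Finset V → ℝ) :
    ∑ σ ∈ X.K (b + 2), ∑ τ ∈ (X.K (b + 1)).filter (· ⊆ σ),
        ∑ τ' ∈ ((X.K (b + 1)).filter (· ⊆ σ)).erase τ, X.m σ * (ψ τ * ψ τ') =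
      ∑ ρ ∈ X.K b, ∑ τ ∈ (X.link ρ).K 1,
        ∑ τ' ∈ ((X.link ρ).K 1).filter (τ ∪ · ∈ (X.link ρ).K 2),
          (X.link ρ).m (τ ∪ τ') * (localize ψ ρ τ * localize ψ ρ τ') := by
  simp only [Finset.sum_sigma']
  refine Finset.sum_nbij' (fun x => ⟨x.2.1 ∩ x.2.2, x.2.1 \ x.2.2, x.2.2 \ x.2.1⟩)
    (fun y => ⟨y.1 ∪ y.2.1 ∪ y.2.2, y.1 ∪ y.2.1, y.1 ∪ y.2.2⟩) ?_ ?_ ?_ ?_ ?_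
  · rintro ⟨σ, τ, τ'⟩ hx
    simp only [Finset.mem_sigma, Finset.mem_filter, Finset.mem_erase] at hx
    obtain ⟨hσ, ⟨hτ, hτσ⟩, hne, hτ', hτ'σ⟩ := hx
    obtain ⟨hρ, ha, ha', hedge, -⟩ := link_edge_of_faces hX hσ hτ hτ' hτσ hτ'σ hne
    simp only [Finset.mem_sigma, Finset.mem_filter]
    exact ⟨hρ, ha, ha', hedge⟩
  · rintro ⟨ρ, a, a'⟩ hy
    simp only [Finset.mem_sigma, Finset.mem_filter] at hy
    obtain ⟨hρ, ha, ha', hedge⟩ := hy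
    obtain ⟨hσ, hτ, hτ', hτσ, hτ'σ, hne, -⟩ := faces_of_link_edge hX hρ ha ha' hedge
    simp only [Finset.mem_sigma, Finset.mem_filter, Finset.mem_erase]
    exact ⟨hσ, ⟨hτ, hτσ⟩, hne, hτ', hτ'σ⟩
  · rintro ⟨σ, τ, τ'⟩ hx
    simp only [Finset.mem_sigma, Finset.mem_filter, Finset.mem_erase] at hx
    obtain ⟨hσ, ⟨hτ, hτσ⟩, hne, hτ', hτ'σ⟩ := hx
    obtain ⟨-, -, -, -, hρτ, hρτ', hunion⟩ := link_edge_of_faces hX hσ hτ hτ' hτσ hτ'σ hne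
    simp only [hρτ, hρτ', Finset.union_sdiff_self_eq_union, hunion]
  · rintro ⟨ρ, a, a'⟩ hy
    simp only [Finset.mem_sigma, Finset.mem_filter] at hy
    obtain ⟨hρ, ha, ha', hedge⟩ := hy
    obtain ⟨-, -, -, -, -, -, hinter, hsdiff, hsdiff'⟩ := faces_of_link_edge hX hρ ha ha' hedge
    simp only [hinter, hsdiff, hsdiff']
  · rintro ⟨σ, τ, τ'⟩ hx
    simp only [Finset.mem_sigma, Finset.mem_filter, Finset.mem_erase] at hx
    obtain ⟨hσ, ⟨hτ, hτσ⟩, hne, hτ', hτ'σ⟩ := hx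
    obtain ⟨-, -, -, -, hρτ, hρτ', hunion⟩ := link_edge_of_faces hX hσ hτ hτ' hτσ hτ'σ hne
    simp only [link_m, localize, hρτ, hρτ', ← Finset.union_assoc,
      Finset.union_sdiff_self_eq_union, hunion]

lemma normSq_d_eq (hX : X.IsWSC n) {b : ℕ} (hbn : b + 1 ≤ n) (ψ : Finset V → ℝ) :
    X.normSq (b + 2) (X.d (b + 1) ψ) =
      X.normSq (b + 1) ψ + ∑ ρ ∈ X.K b, X.localForm ρ ψ + X.normSq b (X.dStar b ψ) := by
  have hsquare : X.normSq (b + 2) (X.d (b + 1) ψ) =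
      ∑ σ ∈ X.K (b + 2), ∑ τ ∈ (X.K (b + 1)).filter (· ⊆ σ), X.m σ * (ψ τ * ψ τ) +
      ∑ σ ∈ X.K (b + 2), ∑ τ ∈ (X.K (b + 1)).filter (· ⊆ σ),
        ∑ τ' ∈ ((X.K (b + 1)).filter (· ⊆ σ)).erase τ, X.m σ * (ψ τ * ψ τ') := by
    rw [normSq, inn, ← Finset.sum_add_distrib]
    refine Finset.sum_congr rfl fun σ _ => ?_
    rw [d, Finset.sum_mul_sum, Finset.mul_sum, ← Finset.sum_add_distrib]
    refine Finset.sum_congr rfl fun τ hτ => ?_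
    rw [Finset.mul_sum]
    exact (Finset.add_sum_erase _ _ hτ).symm
  have hdiag : ∑ σ ∈ X.K (b + 2), ∑ τ ∈ (X.K (b + 1)).filter (· ⊆ σ),
      X.m σ * (ψ τ * ψ τ) = X.normSq (b + 1) ψ := by
    rw [sum_sum_filter_comm (X.K (b + 2)) (X.K (b + 1)) (fun σ τ => τ ⊆ σ)]
    exact Finset.sum_congr rfl fun τ hτ => by
      rw [← Finset.sum_mul, ← hX.m_eq_sum_covers hbn hτ]
  have hlocal : ∑ ρ ∈ X.K b, X.localForm ρ ψ =
      ∑ ρ ∈ X.K b, (X.link ρ).inn 1 ((X.link ρ).Mup' 1 (localize ψ ρ)) (localize ψ ρ) -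
        X.normSq b (X.dStar b ψ) := by
    rw [normSq, inn, ← Finset.sum_sub_distrib]
    exact Finset.sum_congr rfl fun ρ hρ => localForm_eq hX hbn hρ ψ
  rw [hsquare, hdiag, sum_cross_terms hX, hlocal,
    Finset.sum_congr rfl fun ρ _ => inn_Mup'_one (fun τ hτ => (link_m_pos hX hτ).ne') _]
  ring

/-! ### The descent -/

/-- The ratio `‖d* ψ‖² / ‖d d* ψ‖²`; if `d d* ψ = 0` then `d* ψ = 0` too, so the junk value
`0 / 0 = 0` does no harm. -/
def descentRatio (X : WSC V) (c : ℕ) (ψ : Finset V → ℝ) : ℝ :=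
  X.normSq c (X.dStar c ψ) / X.normSq (c + 1) (X.d c (X.dStar c ψ))

def descend (X : WSC V) (c : ℕ) (ψ : Finset V → ℝ) : Finset V → ℝ :=
  √(X.descentRatio c ψ) • X.dStar c ψ

def residual (X : WSC V) (c : ℕ) (ψ : Finset V → ℝ) : Finset V → ℝ :=
  ψ - X.descentRatio c ψ • X.d c (X.dStar c ψ)

lemma descentRatio_nonneg (hX : X.IsWSC n) (c : ℕ) (ψ : Finset V → ℝ) :
    0 ≤ X.descentRatio c ψ :=
  div_nonneg (normSq_nonneg hX _ _) (normSq_nonneg hX _ _)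

lemma descentRatio_mul_normSq (hX : X.IsWSC n) (c : ℕ) (ψ : Finset V → ℝ) :
    X.descentRatio c ψ * X.normSq (c + 1) (X.d c (X.dStar c ψ)) = X.normSq c (X.dStar c ψ) := by
  by_cases h : X.normSq (c + 1) (X.d c (X.dStar c ψ)) = 0
  · rw [h, mul_zero, normSq, ← inn_d_eq_inn_dStar hX]
    exact (Finset.sum_eq_zero fun σ hσ => by
      rw [eq_zero_of_normSq_eq_zero hX h hσ, zero_mul, mul_zero]).symm
  · exact div_mul_cancel₀ _ h

lemma normSq_descend (hX : X.IsWSC n) (c : ℕ) (ψ : Finset V → ℝ) :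
    X.normSq c (X.descend c ψ) = X.descentRatio c ψ * X.normSq c (X.dStar c ψ) := by
  rw [descend, normSq_smul, Real.sq_sqrt (descentRatio_nonneg hX c ψ)]

lemma normSq_d_descend (hX : X.IsWSC n) (c : ℕ) (ψ : Finset V → ℝ) :
    X.normSq (c + 1) (X.d c (X.descend c ψ)) = X.normSq c (X.dStar c ψ) := by
  rw [descend, d_smul, normSq_smul, Real.sq_sqrt (descentRatio_nonneg hX c ψ),
    descentRatio_mul_normSq hX]

lemma normSq_residual (hX : X.IsWSC n) (c : ℕ) (ψ : Finset V → ℝ) :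
    X.normSq (c + 1) (X.residual c ψ) = X.normSq (c + 1) ψ - X.normSq c (X.descend c ψ) := by
  rw [residual, normSq_sub_smul, inn_d_eq_inn_dStar hX, ← normSq, normSq_descend hX, pow_two,
    mul_assoc (X.descentRatio c ψ), descentRatio_mul_normSq hX]
  ring

lemma cochainZero_descend (hX : X.IsWSC n) {c : ℕ} {ψ : Finset V → ℝ}
    (hψ : X.cochainZero (c + 1) ψ) : X.cochainZero c (X.descend c ψ) :=
  cochainZero_smul _ (cochainZero_dStar hX hψ)

lemma cochainZero_residual (hX : X.IsWSC n) {c : ℕ} (hc : c ≤ n) {ψ : Finset V → ℝ}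
    (hψ : X.cochainZero (c + 1) ψ) : X.cochainZero (c + 1) (X.residual c ψ) :=
  cochainZero_sub hψ (cochainZero_smul _ (cochainZero_d hX hc (cochainZero_dStar hX hψ)))

/-- `X.descendSeq k φ i` is the paper's `(φ^i)'`, and `X.residual i` of it is `φ^i`. -/
def descendSeq (X : WSC V) (k : ℕ) (φ : Finset V → ℝ) (i : ℕ) : Finset V → ℝ :=
  if i < k then X.descend (i + 1) (X.descendSeq k φ (i + 1)) else φ
termination_by k - i

lemma descendSeq_self (k : ℕ) (φ : Finset V → ℝ) : X.descendSeq k φ k = φ := by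
  rw [descendSeq, if_neg (lt_irrefl k)]

lemma descendSeq_of_lt {k i : ℕ} (φ : Finset V → ℝ) (hi : i < k) :
    X.descendSeq k φ i = X.descend (i + 1) (X.descendSeq k φ (i + 1)) := by
  rw [descendSeq, if_pos hi]

lemma cochainZero_descendSeq (hX : X.IsWSC n) {k : ℕ} {φ : Finset V → ℝ}
    (hφ : X.cochainZero (k + 1) φ) {i : ℕ} (hi : i ≤ k) :
    X.cochainZero (i + 1) (X.descendSeq k φ i) := by
  induction hi using Nat.decreasingInduction with
  | self => rwa [descendSeq_self]
  | of_succ i hi ih => rw [descendSeq_of_lt φ hi]; exact cochainZero_descend hX ih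

lemma normSq_descendSeq (hX : X.IsWSC n) {k : ℕ} {φ : Finset V → ℝ}
    (hφ : X.cochainZero (k + 1) φ) {i : ℕ} (hi : i ≤ k) :
    X.normSq (i + 1) (X.descendSeq k φ i) =
      ∑ j ∈ Finset.range (i + 1), X.normSq (j + 1) (X.residual j (X.descendSeq k φ j)) := by
  induction i with
  | zero =>
    rw [Finset.sum_range_one, normSq_residual hX, normSq_zero_eq_zero_of_cochainZero hX
      (cochainZero_descend hX (cochainZero_descendSeq hX hφ hi)), sub_zero]
  | succ i ih =>
    rw [Finset.sum_range_succ, ← ih (by omega), normSq_residual hX,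
      ← descendSeq_of_lt φ (by omega)]
    ring

lemma normSq_d_descendSeq (hX : X.IsWSC n) {k : ℕ} (hk : k < n) {φ : Finset V → ℝ}
    (hφ : X.cochainZero (k + 1) φ) {i : ℕ} (hi : i ≤ k) :
    X.normSq (i + 2) (X.d (i + 1) (X.descendSeq k φ i)) =
      ∑ j ∈ Finset.range (i + 1), (X.normSq (j + 1) (X.descendSeq k φ j) +
        ∑ ρ ∈ X.K j, X.localForm ρ (X.descendSeq k φ j)) := by
  rw [normSq_d_eq hX (by omega), Finset.sum_range_succ]
  induction i with
  | zero =>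
    rw [Finset.sum_range_zero, normSq_zero_eq_zero_of_cochainZero hX
      (cochainZero_dStar hX (cochainZero_descendSeq hX hφ hi))]
    ring
  | succ i ih =>
    rw [← normSq_d_descend hX, ← descendSeq_of_lt φ (by omega), normSq_d_eq hX (by omega),
      ih (by omega), Finset.sum_range_succ _ i]
    ring

end WSC

/-- **Decomposition Theorem.** For every `0 ≤ k ≤ n-1` and every
`φ ∈ C^k_0(X,ℝ)` there are `φ^i ∈ C^i_0(X,ℝ)` (`0 ≤ i ≤ k`, here `f i`) and
`(φ^i)' ∈ C^i_0(X,ℝ)` (here `g i`, with `(φ^k)' = φ`) such that: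
(1) for every `0 ≤ i ≤ k`, `‖(φ^i)'‖² = ‖φ^i‖² + ... + ‖φ^0‖²`; and
(2) `‖dφ‖² = Σ_{i=0}^{k} (k+1-i) ‖φ^i‖²
      + Σ_{i=0}^{k} Σ_{τ ∈ X(i-1)} ⟨(M')⁺_{τ,0}(I - M⁻_{τ,0})(φ^i)'_τ, (φ^i)'_τ⟩`. -/
theorem decomposition_theorem {V : Type*} [DecidableEq V] (X : WSC V) (n : ℕ)
    (hX : X.IsWSC n) (k : ℕ) (hk : k < n) (φ : Finset V → ℝ)
    (hφ : X.cochainZero (k + 1) φ) :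
    ∃ f g : ℕ → Finset V → ℝ,
      g k = φ ∧
      (∀ i ≤ k, X.cochainZero (i + 1) (f i)) ∧
      (∀ i ≤ k, X.cochainZero (i + 1) (g i)) ∧
      (∀ i ≤ k, X.normSq (i + 1) (g i) =
        ∑ j ∈ Finset.range (i + 1), X.normSq (j + 1) (f j)) ∧
      X.normSq (k + 2) (X.d (k + 1) φ) =
        (∑ i ∈ Finset.range (k + 1), ((k : ℝ) + 1 - (i : ℝ)) * X.normSq (i + 1) (f i)) +
        ∑ i ∈ Finset.range (k + 1), ∑ τ ∈ X.K i,
          (X.link τ).inn 1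
            ((X.link τ).Mup' 1
              (fun η => localize (g i) τ η - (X.link τ).Mdown 1 (localize (g i) τ) η))
            (localize (g i) τ) := by
  set g := X.descendSeq k φ
  refine ⟨fun i => X.residual i (g i), g, descendSeq_self k φ,
    fun i hi => cochainZero_residual hX (by omega) (cochainZero_descendSeq hX hφ hi),
    fun i hi => cochainZero_descendSeq hX hφ hi, fun i hi => normSq_descendSeq hX hφ hi, ?_⟩
  rw [← descendSeq_self k φ, normSq_d_descendSeq hX hk hφ le_rfl, Finset.sum_add_distrib,
    ← sum_range_sum_range_succ]
  congr 1
  exact Finset.sum_congr rfl fun i hi =>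
    normSq_descendSeq hX hφ (Nat.lt_succ_iff.mp (Finset.mem_range.mp hi))
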